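/- arXiv:1103.3854 — 2 statements merged into one kernel-verified Lean document; each statement's English description precedes it below -/
import Mathlib

section
/- For any nonempty graph G = (V,E) with minimum degree δ(G), D_G(x) = Σ_{J ⊆ V, |J| ≤ |V| - δ(G)} (-1)^{|J|} [(x+1)^{|V| - |N_G[J]|} - 1]. -/
open scoped Classical
open Finset

/-- The closed neighbourhood of a finite set of vertices `J` in `G`. -/
noncomputable def closedNbhd {V : Type*} [Fintype V] (G : SimpleGraph V) (J : Finset V) :
    Finset V :=
  Finset.univ.filter (fun v => v ∈ J ∨ ∃ j ∈ J, G.Adj j v)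

/-- `X` is a dominating set of `G`. -/
def IsDominating {V : Type*} (G : SimpleGraph V) (X : Finset V) : Prop :=
  ∀ v, v ∈ X ∨ ∃ x ∈ X, G.Adj x v

/-- Domination reliability: probability that the random set of operating vertices
(vertex `v` operating independently with probability `p v`) is a dominating set. -/
noncomputable def DRel {V : Type*} [Fintype V] (G : SimpleGraph V) (p : V → ℝ) : ℝ :=
  ∑ X ∈ Finset.univ.filter (fun X : Finset V => IsDominating G X),
    (∏ v ∈ X, p v) * ∏ v ∈ Xᶜ, (1 - p v)

/-- The domination polynomial of `G`, evaluated at a real `x`. -/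
noncomputable def domPoly {V : Type*} [Fintype V] (G : SimpleGraph V) (x : ℝ) : ℝ :=
  ∑ X ∈ Finset.univ.filter (fun X : Finset V => IsDominating G X), x ^ X.card

lemma aux_sum_pow {α : Type*} [DecidableEq α] (s : Finset α) (x : ℝ) :
    ∑ t ∈ s.powerset, x ^ t.card = (x + 1) ^ s.card := by
  rw [← prod_const, prod_add]
  simp [prod_const]

lemma aux_alt {α : Type*} [DecidableEq α] (s : Finset α) :
    ∑ t ∈ s.powerset, (-1 : ℝ) ^ t.card = if s = ∅ then 1 else 0 := by
  have h2 := Finset.sum_powerset_neg_one_pow_card (x := s)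
  have h : ((∑ m ∈ s.powerset, (-1 : ℤ) ^ m.card : ℤ) : ℝ)
      = ∑ m ∈ s.powerset, (-1 : ℝ) ^ m.card := by push_cast; ring_nf
  rw [← h, h2]; split <;> simp

lemma mem_cn {V : Type*} [Fintype V] (G : SimpleGraph V) (J : Finset V) (v : V) :
    v ∈ closedNbhd G J ↔ v ∈ J ∨ ∃ j ∈ J, G.Adj j v := by
  simp [closedNbhd]

lemma aux_symm {V : Type*} [Fintype V] (G : SimpleGraph V) (X J : Finset V) :
    X ⊆ (closedNbhd G J)ᶜ ↔ J ⊆ (closedNbhd G X)ᶜ := by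
  simp only [subset_iff, mem_compl, closedNbhd, mem_filter, mem_univ, true_and, not_or,
    not_exists, not_and]
  constructor
  · intro h j hj
    refine ⟨fun hjX => (h hjX).1 hj, fun v hv hadj => (h hv).2 j hj hadj.symm⟩
  · intro h v hv
    refine ⟨fun hvJ => (h hvJ).1 hv, fun j hj hadj => (h hj).2 v hv hadj.symm⟩

lemma aux_dom {V : Type*} [Fintype V] (G : SimpleGraph V) (X : Finset V) :
    IsDominating G X ↔ (closedNbhd G X)ᶜ = ∅ := by
  unfold IsDominating closedNbhd
  simp only [eq_empty_iff_forall_notMem, mem_compl, mem_filter, mem_univ, true_and]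
  exact ⟨fun h v hv => hv (h v), fun h v => not_not.mp fun hv => h v hv⟩

set_option maxRecDepth 4000 in
lemma aux_full {V : Type*} [Fintype V] (G : SimpleGraph V) [DecidableRel G.Adj] (J : Finset V)
    (h : Fintype.card V - G.minDegree < J.card) : closedNbhd G J = univ := by
  ext v
  simp only [mem_univ, iff_true, mem_cn]
  have hd : G.minDegree ≤ G.degree v := G.minDegree_le_degree v
  set N : Finset V := insert v (G.neighborFinset v) with hN
  have hNcard : G.degree v + 1 ≤ N.card := by
    rw [hN, card_insert_of_notMem (by simp), SimpleGraph.card_neighborFinset_eq_degree]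
  have hle : Fintype.card V < J.card + N.card := by
    have : G.minDegree < N.card := lt_of_lt_of_le (Nat.lt_succ_of_le hd) hNcard
    omega
  have hnd : ¬ Disjoint J N := by
    intro hdisj
    have h1 : (J ∪ N).card ≤ Fintype.card V := card_le_univ _
    rw [card_union_of_disjoint hdisj] at h1
    omega
  obtain ⟨j, hjJ, hjN⟩ := not_disjoint_iff.mp hnd
  rw [hN, mem_insert, SimpleGraph.mem_neighborFinset] at hjN
  rcases hjN with rfl | hadj
  · exact Or.inl hjJ
  · exact Or.inr ⟨j, hjJ, hadj.symm⟩

lemma aux_powerset_eq {V : Type*} [Fintype V] (S : Finset V) :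
    S.powerset = univ.filter (fun J : Finset V => J ⊆ S) := by
  ext J; simp

theorem domPoly_min_degree {V : Type*} [Fintype V] [Nonempty V]
    (G : SimpleGraph V) [DecidableRel G.Adj] (x : ℝ) :
    domPoly G x = ∑ J ∈ Finset.univ.filter
        (fun J : Finset V => J.card ≤ Fintype.card V - G.minDegree),
      (-1 : ℝ) ^ J.card *
        ((x + 1) ^ (Fintype.card V - (closedNbhd G J).card) - 1) := by
  classical
  -- Step 1: full inclusion-exclusion formula
  have step1 : domPoly G x = ∑ J : Finset V,
      (-1 : ℝ) ^ J.card * (x + 1) ^ (Fintype.card V - (closedNbhd G J).card) := by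
    rw [domPoly, sum_filter]
    have : ∀ X : Finset V, (if IsDominating G X then (x : ℝ) ^ X.card else 0)
        = ∑ J : Finset V, (if J ⊆ (closedNbhd G X)ᶜ then x ^ X.card * (-1 : ℝ) ^ J.card else 0) := by
      intro X
      rw [← sum_filter, ← aux_powerset_eq, ← mul_sum, aux_alt, aux_dom]
      split <;> simp
    rw [sum_congr rfl fun X _ => this X, sum_comm]
    refine sum_congr rfl fun J _ => ?_
    have hJ : ∀ X : Finset V, (if J ⊆ (closedNbhd G X)ᶜ then x ^ X.card * (-1 : ℝ) ^ J.card else 0)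
        = (if X ⊆ (closedNbhd G J)ᶜ then x ^ X.card * (-1 : ℝ) ^ J.card else 0) := by
      intro X; exact if_congr (aux_symm G X J).symm rfl rfl
    rw [sum_congr rfl fun X _ => hJ X, ← sum_filter, ← aux_powerset_eq]
    have : ∑ X ∈ ((closedNbhd G J)ᶜ).powerset, x ^ X.card * (-1 : ℝ) ^ J.card
        = (-1 : ℝ) ^ J.card * ∑ X ∈ ((closedNbhd G J)ᶜ).powerset, x ^ X.card := by
      rw [mul_sum]; exact sum_congr rfl fun _ _ => mul_comm _ _
    rw [this, aux_sum_pow, card_compl]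
  -- Step 2: split the sum
  set P := fun J : Finset V => J.card ≤ Fintype.card V - G.minDegree with hP
  rw [step1, ← sum_filter_add_sum_filter_not univ P]
  have hbig : ∑ J ∈ univ.filter (fun J => ¬ P J),
      (-1 : ℝ) ^ J.card * (x + 1) ^ (Fintype.card V - (closedNbhd G J).card)
      = ∑ J ∈ univ.filter (fun J => ¬ P J), (-1 : ℝ) ^ J.card := by
    refine sum_congr rfl fun J hJ => ?_
    rw [mem_filter] at hJ
    have : closedNbhd G J = univ := aux_full G J (not_le.mp (by simpa [hP] using hJ.2))
    simp [this, card_univ]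
  have htot : (∑ J : Finset V, (-1 : ℝ) ^ J.card) = 0 := by
    have := aux_alt (univ : Finset V)
    rw [powerset_univ] at this
    rw [this, if_neg (by simp [eq_empty_iff_forall_notMem])]
  have hsplit : ∑ J ∈ univ.filter (fun J => ¬ P J), (-1 : ℝ) ^ J.card
      = - ∑ J ∈ univ.filter P, (-1 : ℝ) ^ J.card := by
    have := sum_filter_add_sum_filter_not univ P (fun J : Finset V => (-1 : ℝ) ^ J.card)
    rw [htot] at this
    linarith
  rw [hbig, hsplit, ← Finset.sum_neg_distrib, ← sum_add_distrib]
  refine sum_congr rfl fun J _ => ?_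
  ring
end

section
/- Let G = (V,E) be a graph with no isolated vertices, V linearly ordered, and 𝒳 a set of broken neighbourhoods of G (sets N_G[v] \ {v} where v = max N_G[v]). Then D_G(x) = Σ (-1)^{|J|} (x+1)^{|V| - |N_G[J]|}, where the sum is over subsets J ⊆ V containing no X ∈ 𝒳 as a subset. -/
open scoped Classical
open Finset

/-- `X` is a broken neighbourhood of `G` (w.r.t. the linear order on the vertices). -/
def IsBrokenNbhd {V : Type*} [Fintype V] [LinearOrder V] (G : SimpleGraph V)
    (X : Finset V) : Prop :=
  ∃ v : V, X = closedNbhd G {v} \ {v} ∧ ∀ w ∈ closedNbhd G {v}, w ≤ v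

section helpers
variable {V : Type*} [Fintype V] {G : SimpleGraph V}

lemma mem_closedNbhd {J : Finset V} {v : V} :
    v ∈ closedNbhd G J ↔ v ∈ J ∨ ∃ j ∈ J, G.Adj j v := by
  simp [closedNbhd]

lemma nbhd_symm_aux {S J : Finset V} (h : S ⊆ (closedNbhd G J)ᶜ) :
    J ⊆ (closedNbhd G S)ᶜ := by
  intro j hj
  simp only [Finset.mem_compl, mem_closedNbhd, not_or, not_exists, not_and]
  constructor
  · intro hjS
    have := h hjS
    simp only [Finset.mem_compl, mem_closedNbhd, not_or] at this
    exact this.1 hj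
  · intro s hs hadj
    have := h hs
    simp only [Finset.mem_compl, mem_closedNbhd, not_or, not_exists, not_and] at this
    exact this.2 j hj hadj.symm

lemma nbhd_symm (S J : Finset V) :
    S ⊆ (closedNbhd G J)ᶜ ↔ J ⊆ (closedNbhd G S)ᶜ :=
  ⟨nbhd_symm_aux, nbhd_symm_aux⟩

lemma pow_add_one_eq (x : ℝ) (T : Finset V) :
    (x + 1) ^ T.card = ∑ S ∈ T.powerset, x ^ S.card := by
  rw [← Finset.prod_const, Finset.prod_add]
  simp [Finset.prod_const]

lemma neg_one_powerset_sum (T : Finset V) :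
    ∑ J ∈ T.powerset, (-1 : ℝ) ^ J.card = if T = ∅ then 1 else 0 := by
  have h := pow_add_one_eq (-1 : ℝ) T
  rw [neg_add_cancel] at h
  rw [← h]
  rcases eq_or_ne T ∅ with rfl | hT
  · simp
  · rw [if_neg hT, zero_pow (by simpa [Finset.card_eq_zero] using hT)]

lemma isDominating_iff {S : Finset V} :
    IsDominating G S ↔ (closedNbhd G S)ᶜ = ∅ := by
  simp only [Finset.eq_empty_iff_forall_notMem, Finset.mem_compl, not_not, IsDominating,
    mem_closedNbhd]

lemma base_case (G : SimpleGraph V) (x : ℝ) :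
    domPoly G x = ∑ J : Finset V,
      (-1 : ℝ) ^ J.card * (x + 1) ^ (Fintype.card V - (closedNbhd G J).card) := by
  have hc : ∀ J : Finset V, Fintype.card V - (closedNbhd G J).card
      = ((closedNbhd G J)ᶜ).card := fun J => (Finset.card_compl _).symm
  calc domPoly G x
      = ∑ S : Finset V, if IsDominating G S then x ^ S.card else 0 := by
        rw [domPoly, Finset.sum_filter]
    _ = ∑ S : Finset V, x ^ S.card * (if (closedNbhd G S)ᶜ = ∅ then (1:ℝ) else 0) := by
        refine Finset.sum_congr rfl fun S _ => ?_
        by_cases h : IsDominating G S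
        · rw [if_pos h, if_pos (isDominating_iff.mp h), mul_one]
        · rw [if_neg h, if_neg (fun hh => h (isDominating_iff.mpr hh)), mul_zero]
    _ = ∑ S : Finset V, x ^ S.card * ∑ J ∈ ((closedNbhd G S)ᶜ).powerset, (-1:ℝ) ^ J.card := by
        refine Finset.sum_congr rfl fun S _ => ?_
        rw [neg_one_powerset_sum]
    _ = ∑ S : Finset V, ∑ J : Finset V,
          if J ⊆ (closedNbhd G S)ᶜ then x ^ S.card * (-1:ℝ) ^ J.card else 0 := by
        refine Finset.sum_congr rfl fun S _ => ?_
        rw [Finset.mul_sum, ← Finset.sum_filter]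
        refine Finset.sum_congr ?_ fun _ _ => rfl
        ext J; simp [Finset.mem_powerset]
    _ = ∑ J : Finset V, ∑ S : Finset V,
          if J ⊆ (closedNbhd G S)ᶜ then x ^ S.card * (-1:ℝ) ^ J.card else 0 := by
        rw [Finset.sum_comm]
    _ = ∑ J : Finset V, ∑ S : Finset V,
          if S ⊆ (closedNbhd G J)ᶜ then (-1:ℝ) ^ J.card * x ^ S.card else 0 := by
        refine Finset.sum_congr rfl fun J _ => Finset.sum_congr rfl fun S _ => ?_
        rw [mul_comm]
        by_cases h : S ⊆ (closedNbhd G J)ᶜ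
        · rw [if_pos h, if_pos ((nbhd_symm S J).mp h)]
        · rw [if_neg h, if_neg fun hh => h ((nbhd_symm S J).mpr hh)]
    _ = ∑ J : Finset V, (-1:ℝ) ^ J.card * (x + 1) ^ (Fintype.card V - (closedNbhd G J).card) := by
        refine Finset.sum_congr rfl fun J _ => ?_
        rw [hc, pow_add_one_eq, Finset.mul_sum, ← Finset.sum_filter]
        refine Finset.sum_congr ?_ fun _ _ => rfl
        ext S; simp [Finset.mem_powerset]

lemma closedNbhd_mono {J K : Finset V} (h : J ⊆ K) : closedNbhd G J ⊆ closedNbhd G K := by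
  intro u hu
  rw [mem_closedNbhd] at hu ⊢
  rcases hu with hu | ⟨j, hj, hadj⟩
  · exact Or.inl (h hu)
  · exact Or.inr ⟨j, h hj, hadj⟩

lemma closedNbhd_insert [DecidableEq V] (hiso : ∀ v : V, ∃ w, G.Adj v w) {v : V} {J : Finset V}
    (hX : ∀ w, G.Adj v w → w ∈ J) :
    closedNbhd G (insert v J) = closedNbhd G J := by
  obtain ⟨w, hw⟩ := hiso v
  have hwJ : w ∈ J := hX w hw
  apply Finset.Subset.antisymm
  · intro u hu
    rw [mem_closedNbhd] at hu ⊢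
    rcases hu with hu | ⟨j, hj, hadj⟩
    · rcases Finset.mem_insert.mp hu with rfl | hu
      · exact Or.inr ⟨w, hwJ, hw.symm⟩
      · exact Or.inl hu
    · rcases Finset.mem_insert.mp hj with rfl | hj
      · exact Or.inl (hX u hadj)
      · exact Or.inr ⟨j, hj, hadj⟩
  · exact closedNbhd_mono (Finset.subset_insert _ _)

end helpers

section main
variable {V : Type*} [Fintype V] [LinearOrder V]

lemma aux_induction (G : SimpleGraph V) (hiso : ∀ v : V, ∃ w, G.Adj v w) (x : ℝ) :
    ∀ (n : ℕ) (𝒴 : Finset (Finset V)), 𝒴.card = n → (∀ X ∈ 𝒴, IsBrokenNbhd G X) →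
    ∑ J ∈ Finset.univ.filter (fun J : Finset V => ∀ X ∈ 𝒴, ¬ X ⊆ J),
      (-1:ℝ) ^ J.card * (x + 1) ^ (Fintype.card V - (closedNbhd G J).card) = domPoly G x := by
  intro n
  induction n with
  | zero =>
    intro 𝒴 hcard _
    rw [Finset.card_eq_zero] at hcard
    subst hcard
    simp only [Finset.notMem_empty, false_implies, implies_true, Finset.filter_true_of_mem,
      fun _ _ => trivial]
    exact (base_case G x).symm
  | succ n ih =>
    intro 𝒴 hcard hbro
    have hne : 𝒴.Nonempty := Finset.card_pos.mp (by omega)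
    set P := (Finset.univ ×ˢ 𝒴).filter (fun p : V × Finset V =>
      p.2 = closedNbhd G {p.1} \ {p.1} ∧ ∀ w ∈ closedNbhd G {p.1}, w ≤ p.1) with hP
    have hPne : P.Nonempty := by
      obtain ⟨X, hX⟩ := hne
      obtain ⟨v, hv1, hv2⟩ := hbro X hX
      exact ⟨(v, X), Finset.mem_filter.mpr
        ⟨Finset.mem_product.mpr ⟨Finset.mem_univ _, hX⟩, hv1, hv2⟩⟩
    obtain ⟨⟨v, X⟩, hvX, hmax⟩ := Finset.exists_max_image P Prod.fst hPne
    rw [hP, Finset.mem_filter, Finset.mem_product] at hvX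
    obtain ⟨⟨-, hXmem⟩, hXeq, hvtop⟩ := hvX
    dsimp only at hXmem hXeq hvtop hmax
    have hvnotX : v ∉ X := by simp [hXeq]
    have hXsub : ∀ {J' : Finset V}, X ⊆ J' → ∀ w, G.Adj v w → w ∈ J' := by
      intro J' hsub w hw
      refine hsub ?_
      rw [hXeq, Finset.mem_sdiff, Finset.mem_singleton]
      exact ⟨mem_closedNbhd.mpr (Or.inr ⟨v, Finset.mem_singleton_self v, hw⟩), hw.ne'⟩
    set 𝒴' := 𝒴.erase X with h𝒴'
    have hcard' : 𝒴'.card = n := by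
      rw [h𝒴', Finset.card_erase_of_mem hXmem, hcard]
      omega
    have hIH := ih 𝒴' hcard' (fun X' hX' => hbro X' (Finset.mem_of_mem_erase hX'))
    rw [← hIH,
      ← Finset.sum_filter_add_sum_filter_not
        (Finset.univ.filter (fun J : Finset V => ∀ X' ∈ 𝒴', ¬ X' ⊆ J)) (fun J => X ⊆ J)]
    have hset : (Finset.univ.filter (fun J : Finset V => ∀ X' ∈ 𝒴', ¬ X' ⊆ J)).filter
          (fun J => ¬ X ⊆ J)
        = Finset.univ.filter (fun J : Finset V => ∀ X' ∈ 𝒴, ¬ X' ⊆ J) := by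
      ext J
      simp only [Finset.mem_filter, Finset.mem_univ, true_and]
      constructor
      · rintro ⟨h1, h2⟩ X' hX'
        rcases eq_or_ne X' X with rfl | hne'
        · exact h2
        · exact h1 X' (Finset.mem_erase.mpr ⟨hne', hX'⟩)
      · intro h
        exact ⟨fun X' hX' => h X' (Finset.mem_of_mem_erase hX'), h X hXmem⟩
    rw [hset]
    have hzero : ∑ J ∈ (Finset.univ.filter
          (fun J : Finset V => ∀ X' ∈ 𝒴', ¬ X' ⊆ J)).filter (fun J => X ⊆ J),
        (-1:ℝ) ^ J.card * (x + 1) ^ (Fintype.card V - (closedNbhd G J).card) = 0 := by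
      refine Finset.sum_involution
        (fun J _ => if v ∈ J then J.erase v else insert v J) ?_ ?_ ?_ ?_
      · -- f J + f (g J) = 0
        intro J hJ
        simp only [Finset.mem_filter, Finset.mem_univ, true_and] at hJ
        obtain ⟨-, hXJ⟩ := hJ
        split_ifs with hv
        · have hXJ' : X ⊆ J.erase v := Finset.subset_erase.mpr ⟨hXJ, hvnotX⟩
          have hN : closedNbhd G (insert v (J.erase v)) = closedNbhd G (J.erase v) :=
            closedNbhd_insert hiso (hXsub hXJ')
          rw [Finset.insert_erase hv] at hN
          have hc : J.card = (J.erase v).card + 1 := (Finset.card_erase_add_one hv).symm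
          rw [hN, hc, pow_succ]
          ring
        · have hN : closedNbhd G (insert v J) = closedNbhd G J :=
            closedNbhd_insert hiso (hXsub hXJ)
          have hc : (insert v J).card = J.card + 1 := Finset.card_insert_of_notMem hv
          rw [hN, hc, pow_succ]
          ring
      · -- g J ≠ J
        intro J hJ _
        split_ifs with hv
        · simp [hv, Finset.erase_eq_self]
        · simp [hv, Finset.insert_eq_self]
      · -- g J ∈ s
        intro J hJ
        simp only [Finset.mem_filter, Finset.mem_univ, true_and] at hJ ⊢
        obtain ⟨havoid, hXJ⟩ := hJ
        split_ifs with hv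
        · refine ⟨fun X' hX' hsub => havoid X' hX' (hsub.trans (Finset.erase_subset _ _)),
            Finset.subset_erase.mpr ⟨hXJ, hvnotX⟩⟩
        · refine ⟨?_, hXJ.trans (Finset.subset_insert _ _)⟩
          intro X' hX' hsub
          have hvX' : v ∉ X' := by
            intro hvmem
            obtain ⟨u, hu1, hu2⟩ := hbro X' (Finset.mem_of_mem_erase hX')
            have huP : (u, X') ∈ P := Finset.mem_filter.mpr
              ⟨Finset.mem_product.mpr ⟨Finset.mem_univ _, Finset.mem_of_mem_erase hX'⟩, hu1, hu2⟩
            have huv : u ≤ v := hmax (u, X') huP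
            rw [hu1, Finset.mem_sdiff, Finset.mem_singleton] at hvmem
            have hvu : v ≤ u := hu2 v hvmem.1
            exact hvmem.2 (le_antisymm hvu huv)
          have : X' ⊆ J := fun a ha =>
            (Finset.mem_insert.mp (hsub ha)).resolve_left (fun h => hvX' (h ▸ ha))
          exact havoid X' hX' this
      · -- g (g J) = J
        intro J hJ
        by_cases hv : v ∈ J
        · simp only [if_pos hv, Finset.mem_erase, ne_eq, not_true_eq_false, false_and, if_false,
            Finset.insert_erase hv]
        · simp only [if_neg hv, Finset.mem_insert, true_or, if_pos, Finset.erase_insert hv,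
            if_true]
    rw [hzero, zero_add]

end main

theorem domPoly_broken_nbhd {V : Type*} [Fintype V] [LinearOrder V]
    (G : SimpleGraph V) (hiso : ∀ v : V, ∃ w, G.Adj v w)
    (𝒳 : Set (Finset V)) (h𝒳 : ∀ X ∈ 𝒳, IsBrokenNbhd G X) (x : ℝ) :
    domPoly G x = ∑ J ∈ Finset.univ.filter (fun J : Finset V => ∀ X ∈ 𝒳, ¬ X ⊆ J),
      (-1 : ℝ) ^ J.card * (x + 1) ^ (Fintype.card V - (closedNbhd G J).card) := by
  have hfin : 𝒳.Finite := Set.toFinite 𝒳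
  have hsets : Finset.univ.filter (fun J : Finset V => ∀ X ∈ 𝒳, ¬ X ⊆ J)
      = Finset.univ.filter (fun J : Finset V => ∀ X ∈ hfin.toFinset, ¬ X ⊆ J) := by
    ext J
    simp only [Finset.mem_filter, Set.Finite.mem_toFinset]
  rw [hsets]
  exact (aux_induction G hiso x hfin.toFinset.card hfin.toFinset rfl
    (fun X hX => h𝒳 X (hfin.mem_toFinset.mp hX))).symm
end
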